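/- Let G ∈ G* be 2-connected and let C be a longest odd cycle of G with |C| ≥ 5. Then the touching set T(v) is the same for all vertices v outside C. -/

import Mathlib

open SimpleGraph

/-- Adjacency in the line graph `L(G)`: two distinct edges sharing an endpoint. -/
def lineAdj {V : Type*} (G : SimpleGraph V) (e f : G.edgeSet) : Prop :=
  e ≠ f ∧ ∃ x : V, x ∈ (e : Sym2 V) ∧ x ∈ (f : Sym2 V)

/-- `D` is an orientation of the (loopless) adjacency relation `Adj`:
every arc of `D` is an edge, and every edge gets at least one of its two arcs. -/
def IsOrientation {α : Type*} (Adj : α → α → Prop) (D : α → α → Prop) : Prop :=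
  (∀ a b, D a b → Adj a b) ∧ (∀ a b, Adj a b → D a b ∨ D b a)

/-- A digraph (relation) is kernel-perfect if every induced subdigraph has a kernel:
an independent set `S` such that every vertex outside `S` has an out-neighbor in `S`. -/
def KernelPerfect {α : Type*} (D : α → α → Prop) : Prop :=
  ∀ Z : Set α, ∃ S ⊆ Z, (∀ a ∈ S, ∀ b ∈ S, ¬ D a b) ∧
    ∀ z ∈ Z, z ∉ S → ∃ s ∈ S, D z s

/-- Out-degree of a vertex in a digraph given as a relation. -/
noncomputable def outDeg {α : Type*} (D : α → α → Prop) (a : α) : ℕ := {b | D a b}.ncard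

/-- Degree of a vertex. -/
noncomputable def deg {V : Type*} (G : SimpleGraph V) (v : V) : ℕ := (G.neighborSet v).ncard

/-- Maximum degree. -/
noncomputable def maxDeg {V : Type*} (G : SimpleGraph V) : ℕ := sSup (Set.range (deg G))

/-- `G` is `f`-edge-orientable: `L(G)` admits a kernel-perfect orientation with
`1 + d⁺(e) ≤ f e` for every edge `e`. -/
def EdgeOrientable {V : Type*} (G : SimpleGraph V) (f : G.edgeSet → ℕ) : Prop :=
  ∃ D : G.edgeSet → G.edgeSet → Prop,
    IsOrientation (lineAdj G) D ∧ KernelPerfect D ∧ ∀ e, outDeg D e + 1 ≤ f e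

open Classical in
/-- The function `f_{k,v}`: `deg v` on edges incident to `v`, and `k` elsewhere. -/
noncomputable def fkv {V : Type*} (G : SimpleGraph V) (k : ℕ) (v : V) (e : G.edgeSet) : ℕ :=
  if v ∈ (e : Sym2 V) then deg G v else k

/-- `G` is strongly `k`-edge-orientable. -/
def StronglyEdgeOrientable {V : Type*} (G : SimpleGraph V) (k : ℕ) : Prop :=
  ∀ v : V, EdgeOrientable G (fkv G k v)

/-- `G` is `f`-edge-choosable. -/
def FEdgeChoosable {V : Type*} (G : SimpleGraph V) (f : G.edgeSet → ℕ) : Prop :=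
  ∀ ℓ : G.edgeSet → Finset ℕ, (∀ e, f e ≤ (ℓ e).card) →
    ∃ φ : G.edgeSet → ℕ, (∀ e, φ e ∈ ℓ e) ∧
      ∀ e₁ e₂, lineAdj G e₁ e₂ → φ e₁ ≠ φ e₂

/-- `G ∈ G*`: any two distinct odd cycles share at most one edge. -/
def InGStar {V : Type*} (G : SimpleGraph V) : Prop :=
  ∀ (u w : V) (c₁ : G.Walk u u) (c₂ : G.Walk w w),
    c₁.IsCycle → c₂.IsCycle → Odd c₁.length → Odd c₂.length →
    {e | e ∈ c₁.edges} ≠ {e | e ∈ c₂.edges} →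
    ({e | e ∈ c₁.edges} ∩ {e | e ∈ c₂.edges}).ncard ≤ 1

/-- `G` is 2-connected: connected, and still connected after deleting any one vertex. -/
def TwoConn {V : Type*} (G : SimpleGraph V) : Prop :=
  G.Connected ∧ ∀ v : V, (G.induce {w | w ≠ v}).Connected

/-- A block of `G`: a maximal 2-connected subgraph. -/
def IsBlock {V : Type*} (G : SimpleGraph V) (B : G.Subgraph) : Prop :=
  TwoConn B.coe ∧ ∀ B' : G.Subgraph, TwoConn B'.coe → B ≤ B' → B = B'

/-- Vertex type of the theta graph with path lengths `l`: two hubs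
(`Sum.inl false`, `Sum.inl true`) plus the internal vertices of each path. -/
def ThetaVert (l : List ℕ) : Type := Bool ⊕ (Σ i : Fin l.length, Fin (l.get i - 1))

/-- The theta graph `Θ_{l₁,…,l_k}`: two hubs joined by internally disjoint paths,
the `i`-th of length `l i`. -/
def thetaGraph (l : List ℕ) : SimpleGraph (ThetaVert l) :=
  SimpleGraph.fromRel (fun a b =>
    match a, b with
    | Sum.inl false, Sum.inl true => 1 ∈ l
    | Sum.inl false, Sum.inr ⟨_, j⟩ => j.val = 0
    | Sum.inl true, Sum.inr ⟨i, j⟩ => j.val = l.get i - 2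
    | Sum.inr ⟨i, j⟩, Sum.inr ⟨i', j'⟩ => i.val = i'.val ∧ j'.val = j.val + 1
    | _, _ => False)

/-- `v` (outside `c`) touches `w ∈ c`: some `v,w`-path meets `c` only at `w`. -/
def Touches {V : Type*} (G : SimpleGraph V) {u : V} (c : G.Walk u u) (v w : V) : Prop :=
  w ∈ c.support ∧ ∃ p : G.Walk v w, p.IsPath ∧ ∀ x ∈ p.support, x ∈ c.support → x = w

/-!
Call a path of length at least two between distinct vertices `a, b` of `C` that meets `C` only
in its ends an ear. Together with either arc of `C` from `a` to `b` an ear `Q` closes a cycle, and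
one of these two cycles is odd. It shares every edge of its arc with `C`, so in `G*` that arc is
a single edge: `ab ∈ C` and `|Q|` is even. Two vertices touched by `v` are joined by an ear
through `v`, hence `T(v)` is a clique of `C`-edges; a triangle would share two edges with `C`, so
`T(v)` is an edge of `C`. If `T(v₁) ≠ T(v₂)`, the two ears meet only on `C` (a common outer vertex
would let `v₁` touch `T(v₂)`), and replacing both edges of `C` by these even ears yields a longer
odd cycle.
-/

namespace SimpleGraph.Walk

variable {V : Type*} {G : SimpleGraph V}

lemma edges_eq_singleton_of_length_eq_one {u v : V} {p : G.Walk u v} (h : p.length = 1) :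
    p.edges = [s(u, v)] := by
  cases p with
  | nil => simp at h
  | cons _ p =>
    cases p with
    | nil => rfl
    | cons => simp at h

lemma isCycle_append_of_inter_support {a b : V} {p : G.Walk a b} {q : G.Walk b a}
    (hp : p.IsPath) (hq : q.IsPath) (hl : 3 ≤ p.length + q.length)
    (hpq : ∀ x ∈ p.support, x ∈ q.support → x = a ∨ x = b) : (p.append q).IsCycle := by
  refine hp.isCycle_append hq (fun x hxp hxq ↦ ?_) (by omega)
  rcases hpq x (List.mem_of_mem_tail hxp) (List.mem_of_mem_tail hxq) with rfl | rfl
  · exact (List.nodup_cons.mp (p.cons_tail_support ▸ hp.support_nodup)).1 hxp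
  · exact (List.nodup_cons.mp (q.cons_tail_support ▸ hq.support_nodup)).1 hxq

lemma IsCycle.inter_support_of_append {a b : V} {p : G.Walk a b} {q : G.Walk b a}
    (h : (p.append q).IsCycle) : ∀ x ∈ p.support, x ∈ q.support → x = a ∨ x = b := by
  intro x hxp hxq
  have hdisj := List.disjoint_of_nodup_append (tail_support_append p q ▸ h.support_nodup)
  rcases p.mem_support_iff.mp hxp with rfl | hxp
  · exact .inl rfl
  rcases q.mem_support_iff.mp hxq with rfl | hxq
  · exact .inr rfl
  exact absurd hxq (hdisj hxp)

lemma IsCycle.exists_arcs {u a b : V} {c : G.Walk u u} (hc : c.IsCycle)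
    (ha : a ∈ c.support) (hb : b ∈ c.support) (hab : a ≠ b) :
    ∃ (p : G.Walk a b) (q : G.Walk b a), p.IsPath ∧ q.IsPath ∧
      p.length + q.length = c.length ∧
      (∀ x, x ∈ c.support ↔ x ∈ p.support ∨ x ∈ q.support) ∧
      (∀ e, e ∈ c.edges ↔ e ∈ p.edges ∨ e ∈ q.edges) ∧
      ∀ x ∈ p.support, x ∈ q.support → x = a ∨ x = b := by
  classical
  set d := c.rotate a ha
  have hbd : b ∈ d.support := (mem_support_rotate_iff ..).mpr hb
  have hd : ((d.takeUntil b hbd).append (d.dropUntil b hbd)).IsCycle := by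
    rw [take_spec]; exact hc.rotate ha
  refine ⟨d.takeUntil b hbd, d.dropUntil b hbd, hd.isPath_of_append_left (not_nil_of_ne hab.symm),
    hd.isPath_of_append_right (not_nil_of_ne hab), ?_, fun x ↦ ?_, fun e ↦ ?_,
    hd.inter_support_of_append⟩
  · rw [← length_append, take_spec, length_rotate]
  · rw [← mem_support_append_iff, take_spec, mem_support_rotate_iff]
  · rw [← List.mem_append, ← edges_append, take_spec, (rotate_edges c a ha).perm.mem_iff]

lemma IsPath.length_eq_one_and_subset_of_mem_edges {x y : V} {p : G.Walk x y} (hp : p.IsPath)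
    (he : s(x, y) ∈ p.edges) (q : G.Walk y x) :
    p.length = 1 ∧ (∀ z, z ∈ p.support ∨ z ∈ q.support ↔ z ∈ q.support) ∧
      ∀ e, e ∈ p.edges ∨ e ∈ q.edges → e ≠ s(x, y) → e ∈ q.edges := by
  rw [hp.eq_adj_toWalk_of_mem_edges he]
  refine ⟨rfl, fun z ↦ ⟨?_, .inr⟩, fun e ↦ ?_⟩
  · rintro (h | h)
    · simp only [Adj.toWalk, support_cons, support_nil, List.mem_cons, List.not_mem_nil,
        or_false] at h
      rcases h with rfl | rfl
      exacts [q.end_mem_support, q.start_mem_support]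
    · exact h
  · rintro (h | h) hne
    · simp_all
    · exact h

lemma IsCycle.exists_isPath_of_mem_edges {u a b : V} {c : G.Walk u u} (hc : c.IsCycle)
    (he : s(a, b) ∈ c.edges) :
    ∃ r : G.Walk b a, r.IsPath ∧ r.length + 1 = c.length ∧
      (∀ x, x ∈ r.support ↔ x ∈ c.support) ∧ ∀ e ∈ c.edges, e ≠ s(a, b) → e ∈ r.edges := by
  obtain ⟨p, q, hp, hq, hlen, hsupp, hedges, -⟩ := hc.exists_arcs
    (c.fst_mem_support_of_mem_edges he) (c.snd_mem_support_of_mem_edges he)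
    (c.adj_of_mem_edges he).ne
  rcases (hedges _).mp he with hep | heq
  · obtain ⟨hp1, hps, hpe⟩ := hp.length_eq_one_and_subset_of_mem_edges hep q
    exact ⟨q, hq, by omega, fun x ↦ by rw [hsupp, hps],
      fun e he' ↦ hpe e ((hedges e).mp he')⟩
  · obtain ⟨hq1, hqs, hqe⟩ := hq.length_eq_one_and_subset_of_mem_edges (Sym2.eq_swap ▸ heq) p
    refine ⟨p.reverse, hp.reverse, by simp; omega, fun x ↦ ?_, fun e he' hne ↦ ?_⟩
    · rw [support_reverse, List.mem_reverse, hsupp, or_comm, hqs]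
    · rw [edges_reverse, List.mem_reverse]
      exact hqe e (or_comm.mp ((hedges e).mp he')) (Sym2.eq_swap ▸ hne)

end SimpleGraph.Walk

open Walk

section Ears

variable {V : Type*} {G : SimpleGraph V}

structure IsEar {u a b : V} (c : G.Walk u u) (q : G.Walk a b) : Prop where
  start_mem : a ∈ c.support
  end_mem : b ∈ c.support
  isPath : q.IsPath
  two_le_length : 2 ≤ q.length
  eq_or_eq_of_mem : ∀ x ∈ q.support, x ∈ c.support → x = a ∨ x = b

variable {u a b : V} {c : G.Walk u u} {q : G.Walk a b}

lemma IsEar.reverse (hq : IsEar c q) : IsEar c q.reverse where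
  start_mem := hq.end_mem
  end_mem := hq.start_mem
  isPath := hq.isPath.reverse
  two_le_length := by simpa using hq.two_le_length
  eq_or_eq_of_mem x hx hxc := by
    rw [support_reverse, List.mem_reverse] at hx
    exact (hq.eq_or_eq_of_mem x hx hxc).symm

lemma IsEar.ne (hq : IsEar c q) : a ≠ b := by
  rintro rfl
  have := length_eq_zero_iff.mpr (isPath_iff_nil.mp hq.isPath)
  have := hq.two_le_length
  omega

lemma IsEar.exists_edge_notMem (hq : IsEar c q) : ∃ e ∈ q.edges, e ∉ c.edges := by
  obtain ⟨-, -, isPath, two_le_length, eq_or_eq⟩ := hq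
  cases q with
  | nil => simp at two_le_length
  | @cons _ x _ h q' =>
    refine ⟨s(a, x), by simp, fun hc ↦ ?_⟩
    rcases eq_or_eq x (by simp) (c.snd_mem_support_of_mem_edges hc) with rfl | rfl
    · exact h.ne rfl
    · have := isPath.length_eq_one_of_mem_edges (by simp)
      omega

lemma IsEar.touches_start (hq : IsEar c q) {x : V} (hx : x ∈ q.support)
    (hxc : x ∉ c.support) : Touches G c x a := by
  classical
  refine ⟨hq.start_mem, (q.takeUntil x hx).reverse, (hq.isPath.takeUntil hx).reverse,
    fun y hy hyc ↦ ?_⟩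
  rw [support_reverse, List.mem_reverse] at hy
  refine (hq.eq_or_eq_of_mem y (q.support_takeUntil_subset_support hx hy) hyc).resolve_right ?_
  rintro rfl
  exact endpoint_notMem_support_takeUntil hq.isPath hx (fun h ↦ hxc (h ▸ hq.end_mem)) hy

lemma IsEar.touches_end (hq : IsEar c q) {x : V} (hx : x ∈ q.support)
    (hxc : x ∉ c.support) : Touches G c x b :=
  hq.reverse.touches_start (by simpa using hx) hxc

end Ears

section Touching

variable {V : Type*} {G : SimpleGraph V} {u : V} {c : G.Walk u u}

lemma touches_self {w : V} (hw : w ∈ c.support) : Touches G c w w :=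
  ⟨hw, nil, IsPath.nil, fun _ hx _ ↦ by simpa using hx⟩

lemma Touches.of_walk_avoiding {v x w : V} (h : Touches G c x w) (S : G.Walk v x)
    (hS : ∀ y ∈ S.support, y ∉ c.support) : Touches G c v w := by
  classical
  obtain ⟨hw, R, -, hR⟩ := h
  refine ⟨hw, (S.append R).bypass, bypass_isPath _, fun y hy hyc ↦ ?_⟩
  rcases (mem_support_append_iff _ _).mp (support_bypass_subset_support _ hy) with h | h
  · exact absurd hyc (hS y h)
  · exact hR y h hyc

lemma exists_mem_support_touches {v z : V} (W : G.Walk v z) (hz : z ∈ c.support) :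
    ∃ w ∈ W.support, Touches G c v w := by
  classical
  induction W with
  | nil => exact ⟨_, start_mem_support _, touches_self hz⟩
  | @cons x y _ h W ih =>
    by_cases hx : x ∈ c.support
    · exact ⟨x, start_mem_support _, touches_self hx⟩
    obtain ⟨w, hwW, hw, P, -, hP⟩ := ih hz
    refine ⟨w, List.mem_cons_of_mem _ hwW, hw, (cons h P).bypass, bypass_isPath _,
      fun t ht htc ↦ ?_⟩
    rcases List.mem_cons.mp (support_bypass_subset_support _ ht) with rfl | ht
    · exact absurd htc hx
    · exact hP t ht htc

lemma exists_touches_ne (hc : c.IsCycle) (h2 : TwoConn G) {v a : V} (hv : v ∉ c.support)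
    (ha : Touches G c v a) : ∃ b, Touches G c v b ∧ b ≠ a := by
  obtain ⟨z, hz, hza⟩ : ∃ z ∈ c.support, z ≠ a := by
    by_cases hua : u = a
    · exact ⟨c.snd, c.getVert_mem_support 1, hua ▸ (c.adj_snd hc.not_nil).ne'⟩
    · exact ⟨u, c.start_mem_support, hua⟩
  have hva : v ≠ a := fun h ↦ hv (h ▸ ha.1)
  obtain ⟨W⟩ := (h2.2 a).preconnected ⟨v, hva⟩ ⟨z, hza⟩
  obtain ⟨b, hbW, hb⟩ := exists_mem_support_touches (W.map (Embedding.induce _).toHom) hz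
  refine ⟨b, hb, ?_⟩
  rw [Walk.support_map, List.mem_map] at hbW
  obtain ⟨b', -, rfl⟩ := hbW
  exact b'.2

lemma Touches.exists_ear {v a b : V} (ha : Touches G c v a) (hb : Touches G c v b)
    (hab : a ≠ b) : ∃ q : G.Walk a b, IsEar c q ∧
      ∀ x ∈ q.support, x ∉ c.support → ∀ w, Touches G c x w → Touches G c v w := by
  classical
  obtain ⟨haC, Pa, hPa, hPaC⟩ := ha
  obtain ⟨hbC, Pb, hPb, hPbC⟩ := hb
  have reach {y : V} {P : G.Walk v y} (hP : P.IsPath) (hPC : ∀ x ∈ P.support, x ∈ c.support → x = y)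
      {x : V} (hx : x ∈ P.support) (hxc : x ∉ c.support) (w : V) (hxw : Touches G c x w) :
      Touches G c v w := by
    refine hxw.of_walk_avoiding (P.takeUntil x hx) fun t ht htc ↦ ?_
    obtain rfl := hPC t (P.support_takeUntil_subset_support hx ht) htc
    exact endpoint_notMem_support_takeUntil hP hx (fun h ↦ hxc (h ▸ htc)) ht
  set q := (Pa.reverse.append Pb).bypass
  have hqs : ∀ x ∈ q.support, x ∈ Pa.support ∨ x ∈ Pb.support := fun x hx ↦ by
    simpa using support_bypass_subset_support _ hx
  refine ⟨q, ⟨haC, hbC, bypass_isPath _, ?_, fun x hx hxc ↦ ?_⟩, fun x hx hxc ↦ ?_⟩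
  · by_contra! hlt
    have hq1 : q.length = 1 := by
      have := not_nil_iff_lt_length.mp (not_nil_of_ne (p := q) hab); omega
    have hmem := edges_bypass_subset_edges _ (edges_eq_singleton_of_length_eq_one hq1 ▸
      List.mem_singleton_self _)
    simp only [edges_append, edges_reverse, List.mem_append, List.mem_reverse] at hmem
    rcases hmem with hm | hm
    · exact hab (hPaC b (Pa.snd_mem_support_of_mem_edges hm) hbC).symm
    · exact hab (hPbC a (Pb.fst_mem_support_of_mem_edges hm) haC)
  · exact (hqs x hx).imp (hPaC x · hxc) (hPbC x · hxc)
  · exact (hqs x hx).elim (reach hPa hPaC · hxc) (reach hPb hPbC · hxc)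

end Touching

section GStar

variable {V : Type*} {G : SimpleGraph V} {u : V} {c : G.Walk u u}

lemma InGStar.length_le_one (hG : InGStar G) {w x y : V} {d : G.Walk w w}
    (hc : c.IsCycle) (hd : d.IsCycle) (hco : Odd c.length) (hdo : Odd d.length)
    (hdc : ∃ e ∈ d.edges, e ∉ c.edges) {p : G.Walk x y} (hp : p.IsTrail)
    (hpc : ∀ e ∈ p.edges, e ∈ c.edges) (hpd : ∀ e ∈ p.edges, e ∈ d.edges) : p.length ≤ 1 := by
  classical
  obtain ⟨e, hed, hec⟩ := hdc
  have hne : {e | e ∈ c.edges} ≠ {e | e ∈ d.edges} := fun h ↦ hec ((Set.ext_iff.mp h e).mpr hed)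
  calc p.length = (p.edges.toFinset : Set (Sym2 V)).ncard := by
        rw [Set.ncard_coe_finset, List.toFinset_card_of_nodup hp.edges_nodup, length_edges]
    _ ≤ ({e | e ∈ c.edges} ∩ {e | e ∈ d.edges}).ncard := by
        refine Set.ncard_le_ncard (fun f hf ↦ ?_) (c.edges.finite_toSet.inter_of_left _)
        rw [List.coe_toFinset] at hf
        exact ⟨hpc f hf, hpd f hf⟩
    _ ≤ 1 := hG u w c d hc hd hco hdo hne

lemma InGStar.not_triangle (hG : InGStar G) (hc : c.IsCycle) (hco : Odd c.length)
    (hlen : 4 ≤ c.length) {a b w : V} (hab : s(a, b) ∈ c.edges) (hbw : s(b, w) ∈ c.edges)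
    (hwa : s(w, a) ∈ c.edges) : False := by
  have hab' := c.adj_of_mem_edges hab
  have hbw' := c.adj_of_mem_edges hbw
  have hwa' := c.adj_of_mem_edges hwa
  let t : G.Walk a a := cons hab' (cons hbw' (cons hwa' nil))
  have ht : t.IsCycle := by
    simp [t, cons_isCycle_iff, hab'.ne, hbw'.ne, hwa'.ne, hab'.ne', hwa'.ne']
  have hct : ∃ e ∈ c.edges, e ∉ t.edges := by
    by_contra! h
    have := hc.edges_nodup.length_le_of_subset h
    simp [t] at this
    omega
  have := hG.length_le_one ht hc (by simp only [t, length_cons, length_nil]; decide) hco hct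
    (p := cons hab' (cons hbw' nil))
    (IsPath.isTrail (by simp [cons_isPath_iff, hab'.ne, hbw'.ne, hwa'.ne'])) (by simp [t])
    (by simp [hab, hbw])
  simp at this

end GStar

section OddCycle

variable {V : Type*} {G : SimpleGraph V} {u a b : V} {c : G.Walk u u} {q : G.Walk a b}

lemma IsEar.length_eq_one_of_odd (hG : InGStar G) (hc : c.IsCycle) (hco : Odd c.length)
    (hq : IsEar c q) {p : G.Walk b a} (hp : p.IsPath) (hpc : ∀ e ∈ p.edges, e ∈ c.edges)
    (hps : ∀ x ∈ p.support, x ∈ c.support) (hodd : Odd (q.length + p.length)) :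
    p.length = 1 := by
  have hp0 := not_nil_iff_lt_length.mp (not_nil_of_ne (p := p) hq.ne.symm)
  have hZ : (q.append p).IsCycle := isCycle_append_of_inter_support hq.isPath hp
    (by have := hq.two_le_length; omega) fun x hxq hxp ↦ hq.eq_or_eq_of_mem x hxq (hps x hxp)
  obtain ⟨e, heq, hec⟩ := hq.exists_edge_notMem
  have := hG.length_le_one hc hZ hco (by rwa [length_append])
    ⟨e, by simp [heq], hec⟩ hp.isTrail hpc (fun f hf ↦ by simp [hf])
  omega

theorem IsEar.mem_edges_and_even (hG : InGStar G) (hc : c.IsCycle) (hco : Odd c.length)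
    (hq : IsEar c q) : s(a, b) ∈ c.edges ∧ Even q.length := by
  obtain ⟨p₁, p₂, hp₁, hp₂, hlen, hsupp, hedges, -⟩ :=
    hc.exists_arcs hq.start_mem hq.end_mem hq.ne
  obtain ⟨k, hk⟩ := hco
  -- `q ∪ p₁` and `q ∪ p₂` have total length `|c| + 2|q|`, so one of them is an odd cycle.
  rcases Nat.even_or_odd (q.length + p₂.length) with ⟨m, hm⟩ | hodd
  · have h₁ := hq.reverse.length_eq_one_of_odd hG hc ⟨k, hk⟩ hp₁
      (fun e he ↦ (hedges e).mpr (.inl he)) (fun x hx ↦ (hsupp x).mpr (.inl hx))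
      ⟨k + q.length - m, by simp only [length_reverse]; omega⟩
    refine ⟨(hedges _).mpr (.inl (by simp [edges_eq_singleton_of_length_eq_one h₁])), m - k, ?_⟩
    omega
  · have h₂ := hq.length_eq_one_of_odd hG hc ⟨k, hk⟩ hp₂
      (fun e he ↦ (hedges e).mpr (.inr he)) (fun x hx ↦ (hsupp x).mpr (.inr hx)) hodd
    refine ⟨(hedges _).mpr (.inr (by simp [edges_eq_singleton_of_length_eq_one h₂,
      Sym2.eq_swap])), ?_⟩
    rw [h₂] at hodd
    obtain ⟨j, hj⟩ := hodd
    exact ⟨j, by omega⟩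

lemma IsEar.exists_isCycle_replace_edge (hc : c.IsCycle) (hq : IsEar c q)
    (he : s(a, b) ∈ c.edges) :
    ∃ c' : G.Walk a a, c'.IsCycle ∧ c'.length + 1 = c.length + q.length ∧
      (∀ x ∈ c'.support, x ∈ c.support ∨ x ∈ q.support) ∧
      ∀ e ∈ c.edges, e ≠ s(a, b) → e ∈ c'.edges := by
  obtain ⟨r, hr, hrlen, hrs, hre⟩ := hc.exists_isPath_of_mem_edges he
  have := hc.three_le_length
  have := hq.two_le_length
  refine ⟨q.append r, isCycle_append_of_inter_support hq.isPath hr (by omega)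
    fun x hxq hxr ↦ hq.eq_or_eq_of_mem x hxq ((hrs x).mp hxr), by simp; omega,
    fun x hx ↦ ?_, fun e he' hne ↦ by simp [hre e he' hne]⟩
  rcases (mem_support_append_iff _ _).mp hx with h | h
  exacts [.inr h, .inl ((hrs x).mp h)]

theorem exists_longer_odd_cycle_of_even_ears {a₁ b₁ a₂ b₂ : V} (hc : c.IsCycle)
    (hco : Odd c.length)
    (he₁ : s(a₁, b₁) ∈ c.edges) (he₂ : s(a₂, b₂) ∈ c.edges) (hne : s(a₁, b₁) ≠ s(a₂, b₂))
    {q₁ : G.Walk a₁ b₁} {q₂ : G.Walk a₂ b₂} (hq₁ : IsEar c q₁) (hq₂ : IsEar c q₂)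
    (hev₁ : Even q₁.length) (hev₂ : Even q₂.length)
    (hdisj : ∀ x ∈ q₁.support, x ∈ q₂.support → x ∈ c.support) :
    ∃ (w : V) (c' : G.Walk w w), c'.IsCycle ∧ Odd c'.length ∧ c.length < c'.length := by
  obtain ⟨c₁, hc₁, hlen₁, hs₁, he₁'⟩ := hq₁.exists_isCycle_replace_edge hc he₁
  have he₂' := he₁' _ he₂ (Ne.symm hne)
  have hq₂' : IsEar c₁ q₂ :=
    { start_mem := c₁.fst_mem_support_of_mem_edges he₂'
      end_mem := c₁.snd_mem_support_of_mem_edges he₂'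
      isPath := hq₂.isPath
      two_le_length := hq₂.two_le_length
      eq_or_eq_of_mem := fun x hx hxc ↦ hq₂.eq_or_eq_of_mem x hx <|
        (hs₁ x hxc).elim id (hdisj x · hx) }
  obtain ⟨c₂, hc₂, hlen₂, -, -⟩ := hq₂'.exists_isCycle_replace_edge hc₁ he₂'
  obtain ⟨k, hk⟩ := hco
  obtain ⟨m₁, hm₁⟩ := hev₁
  obtain ⟨m₂, hm₂⟩ := hev₂
  have := hq₁.two_le_length
  have := hq₂.two_le_length
  exact ⟨a₂, c₂, hc₂, ⟨k + m₁ + m₂ - 1, by omega⟩, by omega⟩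

end OddCycle

section TouchingSet

variable {V : Type*} {G : SimpleGraph V} {u : V} {c : G.Walk u u}

lemma Touches.mem_edges (hG : InGStar G) (hc : c.IsCycle) (hco : Odd c.length) {v a b : V}
    (ha : Touches G c v a) (hb : Touches G c v b) (hab : a ≠ b) : s(a, b) ∈ c.edges := by
  obtain ⟨q, hq, -⟩ := ha.exists_ear hb hab
  exact (hq.mem_edges_and_even hG hc hco).1

theorem exists_touches_iff (hG : InGStar G) (h2 : TwoConn G) (hc : c.IsCycle)
    (hco : Odd c.length) (hlen : 5 ≤ c.length) {v : V} (hv : v ∉ c.support) :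
    ∃ a b, s(a, b) ∈ c.edges ∧ ∀ w, Touches G c v w ↔ w = a ∨ w = b := by
  obtain ⟨W⟩ := h2.1.preconnected v u
  obtain ⟨a, -, ha⟩ := exists_mem_support_touches W c.start_mem_support
  obtain ⟨b, hb, hba⟩ := exists_touches_ne hc h2 hv ha
  refine ⟨a, b, ha.mem_edges hG hc hco hb hba.symm, fun w ↦ ⟨fun hw ↦ ?_, ?_⟩⟩
  · by_contra! h
    exact hG.not_triangle hc hco (by omega) (ha.mem_edges hG hc hco hb hba.symm)
      (hb.mem_edges hG hc hco hw h.2.symm) (hw.mem_edges hG hc hco ha h.1)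
  · rintro (rfl | rfl)
    exacts [ha, hb]

theorem touching_edge_eq (hG : InGStar G) (hc : c.IsCycle) (hco : Odd c.length)
    (hlongest : ∀ (w : V) (c' : G.Walk w w), c'.IsCycle → Odd c'.length →
      c'.length ≤ c.length)
    {v₁ v₂ a₁ b₁ a₂ b₂ : V} (he₁ : s(a₁, b₁) ∈ c.edges) (he₂ : s(a₂, b₂) ∈ c.edges)
    (h₁ : ∀ w, Touches G c v₁ w ↔ w = a₁ ∨ w = b₁)
    (h₂ : ∀ w, Touches G c v₂ w ↔ w = a₂ ∨ w = b₂) : s(a₁, b₁) = s(a₂, b₂) := by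
  have hab₁ := (c.adj_of_mem_edges he₁).ne
  have hab₂ := (c.adj_of_mem_edges he₂).ne
  by_contra hne
  obtain ⟨q₁, hq₁, hreach⟩ := ((h₁ a₁).mpr (.inl rfl)).exists_ear ((h₁ b₁).mpr (.inr rfl)) hab₁
  obtain ⟨q₂, hq₂, -⟩ := ((h₂ a₂).mpr (.inl rfl)).exists_ear ((h₂ b₂).mpr (.inr rfl)) hab₂
  have hdisj : ∀ x ∈ q₁.support, x ∈ q₂.support → x ∈ c.support := by
    intro x hx₁ hx₂
    by_contra hxc
    refine hne (Sym2.eq_of_ne_mem hab₂ ?_ ?_ (Sym2.mem_mk_left _ _) (Sym2.mem_mk_right _ _))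
    · exact Sym2.mem_iff.mpr <| (h₁ a₂).mp <| hreach x hx₁ hxc _ (hq₂.touches_start hx₂ hxc)
    · exact Sym2.mem_iff.mpr <| (h₁ b₂).mp <| hreach x hx₁ hxc _ (hq₂.touches_end hx₂ hxc)
  obtain ⟨w, c', hc', hodd', hlt⟩ := exists_longer_odd_cycle_of_even_ears hc hco he₁ he₂ hne
    hq₁ hq₂ (hq₁.mem_edges_and_even hG hc hco).2 (hq₂.mem_edges_and_even hG hc hco).2 hdisj
  exact absurd (hlongest w c' hc' hodd') (by omega)

end TouchingSet

theorem stmt9 {V : Type*} (G : SimpleGraph V) (hG : InGStar G) (h2 : TwoConn G)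
    (u : V) (c : G.Walk u u) (hc : c.IsCycle) (hodd : Odd c.length)
    (hlongest : ∀ (w : V) (c' : G.Walk w w), c'.IsCycle → Odd c'.length →
      c'.length ≤ c.length)
    (hlen : 5 ≤ c.length) :
    ∀ v₁ v₂ : V, v₁ ∉ c.support → v₂ ∉ c.support →
      ∀ w : V, Touches G c v₁ w ↔ Touches G c v₂ w := by
  intro v₁ v₂ hv₁ hv₂ w
  obtain ⟨a₁, b₁, he₁, h₁⟩ := exists_touches_iff hG h2 hc hodd hlen hv₁
  obtain ⟨a₂, b₂, he₂, h₂⟩ := exists_touches_iff hG h2 hc hodd hlen hv₂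
  rw [h₁, h₂, ← Sym2.mem_iff, ← Sym2.mem_iff,
    touching_edge_eq hG hc hodd hlongest he₁ he₂ h₁ h₂]
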